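/- Under the substitution z = v/(1+v+v²), the Grand Motzkin generating function G (with G(0)=1 and G²(1-2z-3z²)=1) becomes (1+v+v²)/(1-v²): that is, in ℚ[[v]], G(v/(1+v+v²)) = (1+v+v²)·(1-v²)⁻¹. -/

import Mathlib

/-!
`psComp` agrees with Mathlib's `PowerSeries.subst`, a ring homomorphism, so substituting
`z = v / (1 + v + v²)` into `G² (1 - 2z - 3z²) = 1` gives `A² · ((1 - v²)/(1 + v + v²))² = 1`
for `A = G(z)`. Hence `A (1 - v²)/(1 + v + v²)` squares to `1`; it has constant term `1`, so in the
domain `ℚ⟦v⟧` it is `1` itself.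
-/

open PowerSeries

/-- Composition g ∘ f of formal power series (meaningful when constantCoeff f = 0). -/
noncomputable def psComp (g f : PowerSeries ℚ) : PowerSeries ℚ :=
  PowerSeries.mk fun n =>
    ∑ k ∈ Finset.range (n + 1), (coeff (R := ℚ) k g) * (coeff (R := ℚ) n (f ^ k))

theorem one_sub_two_mul_sub_three_mul_sq_of_mul_eq_one {R : Type*} [CommRing R] {v u : R}
    (hu : u * (1 + v + v ^ 2) = 1) :
    1 - 2 * (v * u) - 3 * (v * u) ^ 2 = ((1 - v ^ 2) * u) ^ 2 := by
  linear_combination (-(1 + u * (1 + v + v ^ 2) - 2 * v * u)) * hu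

namespace PowerSeries

theorem coeff_pow_eq_zero_of_lt {R : Type*} [Semiring R] {f : R⟦X⟧} (hf : constantCoeff f = 0)
    {k n : ℕ} (h : n < k) : coeff n (f ^ k) = 0 :=
  coeff_of_lt_order n ((Nat.cast_lt.mpr h).trans_le (le_order_pow_of_constantCoeff_eq_zero k hf))

theorem eq_one_of_sq_eq_one {R : Type*} [CommRing R] [NoZeroDivisors R] (h2 : (2 : R) ≠ 0)
    {B : R⟦X⟧} (hB : B ^ 2 = 1) (hB0 : constantCoeff B = 1) : B = 1 := by
  refine (sq_eq_one_iff.mp hB).resolve_right fun hneg => h2 ?_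
  rw [hneg, map_neg, map_one] at hB0
  linear_combination -hB0

end PowerSeries

theorem constantCoeff_psComp (g f : PowerSeries ℚ) :
    constantCoeff (psComp g f) = constantCoeff g := by
  rw [← coeff_zero_eq_constantCoeff_apply, psComp, coeff_mk]
  simp

theorem psComp_eq_subst {f : PowerSeries ℚ} (hf : constantCoeff f = 0) (g : PowerSeries ℚ) :
    psComp g f = g.subst f := by
  ext n
  rw [coeff_subst' (HasSubst.of_constantCoeff_zero' hf), psComp, coeff_mk,
    finsum_eq_sum_of_support_subset _ (s := Finset.range (n + 1))]
  · rfl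
  · refine Function.support_subset_iff'.mpr fun k hk => ?_
    rw [Finset.mem_coe, Finset.mem_range, not_lt] at hk
    simp [coeff_pow_eq_zero_of_lt hf hk]

/-- Under z = v/(1+v+v²), the Grand Motzkin generating function G becomes
(1+v+v²)/(1-v²). -/
theorem G_subst_eq
    (G : PowerSeries ℚ)
    (hG0 : constantCoeff (R := ℚ) G = 1)
    (hG : G ^ 2 * (1 - 2 * X - 3 * X ^ 2) = 1) :
    psComp G (X * (1 + X + X ^ 2)⁻¹) = (1 + X + X ^ 2) * (1 - X ^ 2)⁻¹ := by
  set w : ℚ⟦X⟧ := 1 + X + X ^ 2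
  have hw : constantCoeff w ≠ 0 := by simp [w]
  have hf : HasSubst (X * w⁻¹) := HasSubst.of_constantCoeff_zero' (by simp)
  set A := psComp G (X * w⁻¹)
  have hA : A = G.subst (X * w⁻¹) := psComp_eq_subst (by simp) G
  have hB : (A * (1 - X ^ 2) * w⁻¹) ^ 2 = 1 := by
    have := congrArg (substAlgHom hf) hG
    simp only [map_mul, map_pow, map_sub, map_one, map_ofNat, substAlgHom_X, coe_substAlgHom,
      one_sub_two_mul_sub_three_mul_sq_of_mul_eq_one (PowerSeries.inv_mul_cancel w hw)] at this
    rw [hA]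
    linear_combination this
  have hB0 : constantCoeff (A * (1 - X ^ 2) * w⁻¹) = 1 := by
    simp [A, constantCoeff_psComp, hG0, w]
  have hB1 := (eq_mul_inv_iff_mul_eq hw).mp (eq_one_of_sq_eq_one two_ne_zero hB hB0).symm
  rw [eq_mul_inv_iff_mul_eq (by simp), ← hB1, one_mul]
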